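/- arXiv:2209.12545 — 3 statements merged into one kernel-verified Lean document; each statement's English description precedes it below -/
import Mathlib

section
/- Let X be a metric space, x₁, x₂ ∈ X with d(x₁,x₂) ≥ 2, and γ : [a,b] → X a Lipschitz curve from x₁ to x₂ of length ℓ(γ) ≤ 2. Then d(x₁,x₂) = 2, ℓ(γ) = 2, and the image γ([a,b]), equipped with the subspace metric, is isometric to the interval [−1,1] ⊆ ℝ. -/
/-!
Write `V` for the arclength `t ↦ variationOnFromTo γ [a,b] a t`. Each piece of the
partition `a ≤ s ≤ t ≤ b` has length at least the distance between its endpoints, while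
the three lengths add up to `ℓ(γ) ≤ 2 ≤ d(x₁, x₂)`, which by the triangle inequality is at
most the sum of the three distances. Hence every piece has length equal to its chord:
`d(γ s, γ t) = |V s - V t|`. So `V - 1` parametrizes the image of `γ` isometrically, and as
a continuous monotone function from `-1` to `1` it maps `[a,b]` onto `[-1,1]`.
-/

open Set

theorem nonempty_isometryEquiv_image_of_dist_eq {ι X Y : Type*} [MetricSpace X] [MetricSpace Y]
    {f : ι → X} {g : ι → Y} {s : Set ι}
    (hfg : ∀ x ∈ s, ∀ y ∈ s, dist (f x) (f y) = dist (g x) (g y)) :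
    Nonempty (f '' s ≃ᵢ g '' s) := by
  choose pf hpf_mem hpf using fun p : f '' s => p.2
  choose pg hpg_mem hpg using fun q : g '' s => q.2
  refine ⟨IsometryEquiv.mk' (fun p => ⟨g (pf p), mem_image_of_mem g (hpf_mem p)⟩)
    (fun q => ⟨f (pg q), mem_image_of_mem f (hpg_mem q)⟩) (fun q => ?_) ?_⟩
  · refine Subtype.ext (dist_eq_zero.mp ?_)
    rw [← hpg q, ← hfg _ (hpf_mem _) _ (hpg_mem q), hpf, dist_self]
  · refine Isometry.of_dist_eq fun p p' => ?_
    rw [Subtype.dist_eq, Subtype.dist_eq, ← hpf p, ← hpf p', hfg _ (hpf_mem p) _ (hpf_mem p')]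

section Variation

variable {α E : Type*} [LinearOrder α] [PseudoMetricSpace E] {f : α → E}

theorem dist_le_variationOnFromTo {s : Set α} (hf : LocallyBoundedVariationOn f s) {x y : α}
    (hx : x ∈ s) (hy : y ∈ s) (hxy : x ≤ y) :
    dist (f x) (f y) ≤ variationOnFromTo f s x y := by
  rw [variationOnFromTo.eq_of_le f s hxy, dist_edist]
  exact ENNReal.toReal_mono (hf x y hx hy)
    (eVariationOn.edist_le f ⟨hx, le_rfl, hxy⟩ ⟨hy, hxy, le_rfl⟩)

theorem dist_eq_variationOnFromTo_of_eVariationOn_le_edist {a b : α}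
    (hf : BoundedVariationOn f (Icc a b)) (h : eVariationOn f (Icc a b) ≤ edist (f a) (f b))
    {s t : α} (hs : s ∈ Icc a b) (ht : t ∈ Icc a b) (hst : s ≤ t) :
    dist (f s) (f t) = variationOnFromTo f (Icc a b) s t := by
  have hlb := hf.locallyBoundedVariationOn
  have ha : a ∈ Icc a b := ⟨le_rfl, hs.1.trans hs.2⟩
  have hb : b ∈ Icc a b := ⟨hs.1.trans hs.2, le_rfl⟩
  have hV_le : variationOnFromTo f (Icc a b) a b ≤ dist (f a) (f b) := by
    rw [variationOnFromTo.eq_of_le f _ ha.2, inter_self, dist_edist]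
    exact ENNReal.toReal_mono (edist_ne_top _ _) h
  have hV_add : variationOnFromTo f (Icc a b) a s + variationOnFromTo f (Icc a b) s t +
      variationOnFromTo f (Icc a b) t b = variationOnFromTo f (Icc a b) a b := by
    rw [variationOnFromTo.add hlb ha hs ht, variationOnFromTo.add hlb ha ht hb]
  have h₁ := dist_le_variationOnFromTo hlb ha hs hs.1
  have h₂ := dist_le_variationOnFromTo hlb hs ht hst
  have h₃ := dist_le_variationOnFromTo hlb ht hb ht.2
  linarith [dist_triangle4 (f a) (f s) (f t) (f b)]

theorem dist_eq_dist_variationOnFromTo_of_eVariationOn_le_edist {a b : α}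
    (hf : BoundedVariationOn f (Icc a b)) (h : eVariationOn f (Icc a b) ≤ edist (f a) (f b))
    {s t : α} (hs : s ∈ Icc a b) (ht : t ∈ Icc a b) :
    dist (f s) (f t) =
      dist (variationOnFromTo f (Icc a b) a s) (variationOnFromTo f (Icc a b) a t) := by
  wlog hst : s ≤ t generalizing s t
  · rw [dist_comm, dist_comm (variationOnFromTo _ _ a s)]
    exact this ht hs (le_of_not_ge hst)
  have ha : a ∈ Icc a b := ⟨le_rfl, hs.1.trans hs.2⟩
  rw [dist_eq_variationOnFromTo_of_eVariationOn_le_edist hf h hs ht hst, Real.dist_eq,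
    abs_sub_comm, variationOnFromTo.sub_right hf.locallyBoundedVariationOn ha ht hs,
    abs_of_nonneg (variationOnFromTo.nonneg_of_le f _ hst)]

end Variation

/-- If `γ : [a,b] → X` is a Lipschitz curve from `x₁` to `x₂` with `d(x₁,x₂) ≥ 2` and
length (total variation) at most `2`, then `d(x₁,x₂) = 2`, the length is exactly `2`,
and the image of `γ` with the subspace metric is isometric to `[-1,1] ⊆ ℝ`. -/
theorem stmt_5 {X : Type*} [MetricSpace X] (a b : ℝ) (hab : a ≤ b)
    (γ : ℝ → X) (K : NNReal) (hγ : LipschitzOnWith K γ (Set.Icc a b))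
    (x₁ x₂ : X) (ha : γ a = x₁) (hb : γ b = x₂)
    (hd : 2 ≤ dist x₁ x₂) (hlen : eVariationOn γ (Set.Icc a b) ≤ 2) :
    dist x₁ x₂ = 2 ∧ eVariationOn γ (Set.Icc a b) = 2 ∧
      Nonempty ((γ '' Set.Icc a b) ≃ᵢ (Set.Icc (-1 : ℝ) 1)) := by
  have haI : a ∈ Icc a b := left_mem_Icc.mpr hab
  have hbI : b ∈ Icc a b := right_mem_Icc.mpr hab
  have hedist : 2 ≤ edist (γ a) (γ b) := by
    rw [ha, hb, edist_dist]
    exact ENNReal.ofReal_ofNat 2 ▸ ENNReal.ofReal_le_ofReal hd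
  have hE2 : eVariationOn γ (Icc a b) = 2 :=
    hlen.antisymm (hedist.trans (eVariationOn.edist_le γ haI hbI))
  have hbv : BoundedVariationOn γ (Icc a b) := by simp [BoundedVariationOn, hE2]
  set φ : ℝ → ℝ := fun t => variationOnFromTo γ (Icc a b) a t - 1
  have hφ : ∀ s ∈ Icc a b, ∀ t ∈ Icc a b, dist (γ s) (γ t) = dist (φ s) (φ t) :=
    fun s hs t ht => by
      simpa only [φ, dist_sub_right] using
        dist_eq_dist_variationOnFromTo_of_eVariationOn_le_edist hbv (hE2 ▸ hedist) hs ht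
  have hφa : φ a = -1 := by simp [φ, variationOnFromTo.self]
  have hφb : φ b = 1 := by
    simp only [φ, variationOnFromTo.eq_of_le γ _ hab, inter_self, hE2]
    norm_num
  have hφ_image : φ '' Icc a b = Icc (-1) 1 := by
    rw [← hφa, ← hφb]
    refine ContinuousOn.image_Icc_of_monotoneOn hab ?_ ?_
    · exact (LipschitzOnWith.of_dist_le_mul fun s hs t ht =>
        hφ s hs t ht ▸ hγ.dist_le_mul s hs t ht).continuousOn
    · exact fun s hs t ht hst => sub_le_sub_right
        (variationOnFromTo.monotoneOn hbv.locallyBoundedVariationOn haI hs ht hst) 1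
  refine ⟨?_, hE2, hφ_image ▸ nonempty_isometryEquiv_image_of_dist_eq hφ⟩
  rw [← ha, ← hb, hφ a haI b hbI, hφa, hφb, Real.dist_eq]
  norm_num
end

section
/- Every surjective 1-Lipschitz map f : X → X from a compact metric space X to itself is an isometry. -/
open Function

/-!
A surjective `1`-Lipschitz map `f` of a compact space is backward recurrent: following a backward
orbit `y₀ ← y₁ ← y₂ ← …`, compactness gives `k < l` with `yₖ` and `yₗ` close, and applying the
contraction `f^[k]` shows that `y_{l-k}`, a preimage of `y₀` under `f^[l-k]`, is just as close to
`y₀`. Applied to `f × f` at `(x, y)`, this gives `u ≈ x`, `v ≈ y` and `n ≥ 1` with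
`f^[n] (u, v) = (x, y)`, hence `dist x y ≤ dist (f u) (f v) ≈ dist (f x) (f y)`.
-/

theorem LipschitzWith.prodMap {α β γ δ : Type*} [PseudoEMetricSpace α] [PseudoEMetricSpace β]
    [PseudoEMetricSpace γ] [PseudoEMetricSpace δ] {Kf Kg : NNReal} {f : α → γ} {g : β → δ}
    (hf : LipschitzWith Kf f) (hg : LipschitzWith Kg g) :
    LipschitzWith (max Kf Kg) (Prod.map f g) := by
  have h := (hf.comp LipschitzWith.prod_fst).prodMk (hg.comp LipschitzWith.prod_snd)
  rw [mul_one, mul_one] at h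
  exact h

theorem exists_lt_dist_lt_of_compactSpace {X : Type*} [PseudoMetricSpace X] [CompactSpace X]
    (u : ℕ → X) {ε : ℝ} (hε : 0 < ε) : ∃ k l, k < l ∧ dist (u k) (u l) < ε := by
  obtain ⟨_, -, φ, hφ, hconv⟩ := isCompact_univ.tendsto_subseq (x := u) fun _ => Set.mem_univ _
  obtain ⟨N, hN⟩ := Metric.cauchySeq_iff.1 hconv.cauchySeq ε hε
  exact ⟨φ N, φ (N + 1), hφ N.lt_succ_self, hN _ le_rfl _ N.le_succ⟩

theorem exists_iterate_succ_eq_dist_lt {X : Type*} [PseudoMetricSpace X] [CompactSpace X]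
    {f : X → X} (hf : LipschitzWith 1 f) (hsurj : Surjective f) (x : X) {ε : ℝ} (hε : 0 < ε) :
    ∃ n z, f^[n + 1] z = x ∧ dist z x < ε := by
  set y : ℕ → X := fun k => (surjInv hsurj)^[k] x
  have hy : ∀ k, f^[k] (y k) = x := fun k => (rightInverse_surjInv hsurj).iterate k x
  obtain ⟨k, l, hkl, hdist⟩ := exists_lt_dist_lt_of_compactSpace y hε
  obtain ⟨n, rfl⟩ : ∃ n, l = k + (n + 1) := ⟨l - k - 1, by omega⟩
  have hyl : f^[k] (y (k + (n + 1))) = y (n + 1) := by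
    simp only [y, iterate_add_apply]
    exact (rightInverse_surjInv hsurj).iterate k _
  refine ⟨n, y (n + 1), hy _, ?_⟩
  calc dist (y (n + 1)) x = dist (f^[k] (y (k + (n + 1)))) (f^[k] (y k)) := by rw [hyl, hy]
    _ ≤ dist (y (k + (n + 1))) (y k) := by simpa using (hf.iterate k).dist_le_mul _ _
    _ < ε := by rwa [dist_comm]

/-- Every surjective `1`-Lipschitz self-map of a compact metric space is an isometry. -/
theorem stmt_7 {X : Type*} [MetricSpace X] [CompactSpace X]
    (f : X → X) (hf : LipschitzWith 1 f) (hsurj : Function.Surjective f) :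
    Isometry f := by
  refine Isometry.of_dist_eq fun x y => le_antisymm (by simpa using hf.dist_le_mul x y) ?_
  refine le_of_forall_pos_le_add fun ε hε => ?_
  have hff : LipschitzWith 1 (Prod.map f f) := by simpa using hf.prodMap hf
  obtain ⟨n, ⟨u, v⟩, hxy, huv⟩ :=
    exists_iterate_succ_eq_dist_lt hff (hsurj.prodMap hsurj) (x, y) (half_pos hε)
  simp only [Prod.map_iterate, Prod.map_apply, Prod.mk.injEq, iterate_succ_apply] at hxy
  rw [Prod.dist_eq, max_lt_iff] at huv
  have hf_dist : ∀ a b, dist (f a) (f b) ≤ dist a b := by simpa using hf.dist_le_mul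
  calc dist x y = dist (f^[n] (f u)) (f^[n] (f v)) := by rw [hxy.1, hxy.2]
    _ ≤ dist (f u) (f v) := by simpa using (hf.iterate n).dist_le_mul _ _
    _ ≤ dist (f u) (f x) + dist (f x) (f y) + dist (f y) (f v) := dist_triangle4 _ _ _ _
    _ ≤ dist u x + dist (f x) (f y) + dist y v := by gcongr <;> apply hf_dist
    _ ≤ dist (f x) (f y) + ε := by rw [dist_comm y v]; linarith [huv.1, huv.2]
end

section
/- Let X be a metric space. Define d_C on X × [0,1] by d_C((x,r),(y,s)) = sqrt(r² + s² − 2 r s cos(d(x,y))) if d(x,y) < π, and d_C((x,r),(y,s)) = r + s otherwise. Then d_C is a pseudometric on X × [0,1], and the map e : X → X × [0,1], e(x) = (x,1), satisfies d_C(e(x), e(y)) ≤ d(x,y) for all x,y, i.e. e is 1-Lipschitz from (X,d) to (X × [0,1], d_C). -/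
private lemma coneAux_key (s t α β : ℝ) :
    ‖((s : ℂ) * Complex.exp (α * Complex.I) - t * Complex.exp (β * Complex.I))‖
    = Real.sqrt (s^2 + t^2 - 2*s*t*Real.cos (α - β)) := by
  rw [Complex.norm_def, Complex.normSq_apply]
  simp [Complex.exp_mul_I, Real.cos_sub, Complex.cos_ofReal_re, Complex.sin_ofReal_re]
  rw [show ∀ a b : ℝ, a = b → Real.sqrt a = Real.sqrt b from fun a b h => by rw [h]]
  nlinarith [Real.sin_sq_add_cos_sq α, Real.sin_sq_add_cos_sq β]

private lemma coneAux_lb (A B : ℝ) (h : B^2 ≤ A) : B ≤ Real.sqrt A :=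
  calc B ≤ |B| := le_abs_self B
    _ = Real.sqrt (B^2) := (Real.sqrt_sq_eq_abs B).symm
    _ ≤ Real.sqrt A := Real.sqrt_le_sqrt h

private lemma coneAux_ub (r s θ : ℝ) (hr : 0 ≤ r) (hs : 0 ≤ s) :
    Real.sqrt (r^2 + s^2 - 2*r*s*Real.cos θ) ≤ r + s := by
  have h := Real.neg_one_le_cos θ
  calc Real.sqrt (r^2+s^2-2*r*s*Real.cos θ) ≤ Real.sqrt ((r+s)^2) :=
        Real.sqrt_le_sqrt (by nlinarith [mul_nonneg hr hs])
    _ = r + s := Real.sqrt_sq (by linarith)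

/-- The Euclidean cone distance on `X × [0,1]`. -/
noncomputable def coneDist {X : Type*} [MetricSpace X]
    (p q : X × Set.Icc (0 : ℝ) 1) : ℝ :=
  if dist p.1 q.1 < Real.pi then
    Real.sqrt ((p.2 : ℝ) ^ 2 + (q.2 : ℝ) ^ 2
      - 2 * (p.2 : ℝ) * (q.2 : ℝ) * Real.cos (dist p.1 q.1))
  else (p.2 : ℝ) + (q.2 : ℝ)

/-- `coneDist` is a pseudometric on `X × [0,1]` and the map `e(x) = (x,1)` is `1`-Lipschitz
from `(X,d)` to `(X × [0,1], d_C)`. -/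
theorem stmt_12 {X : Type*} [MetricSpace X] :
    (∀ p : X × Set.Icc (0 : ℝ) 1, coneDist p p = 0) ∧
    (∀ p q : X × Set.Icc (0 : ℝ) 1, coneDist p q = coneDist q p) ∧
    (∀ p q : X × Set.Icc (0 : ℝ) 1, 0 ≤ coneDist p q) ∧
    (∀ p q r : X × Set.Icc (0 : ℝ) 1, coneDist p r ≤ coneDist p q + coneDist q r) ∧
    (∀ x y : X, coneDist (x, ⟨1, by norm_num⟩) (y, ⟨1, by norm_num⟩) ≤ dist x y) := by
  have hpi := Real.pi_pos
  refine ⟨?_, ?_, ?_, ?_, ?_⟩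
  · intro p
    simp only [coneDist, dist_self, if_pos hpi, Real.cos_zero]
    rw [show (p.2 : ℝ)^2 + (p.2 : ℝ)^2 - 2*(p.2 : ℝ)*(p.2 : ℝ)*1 = 0 by ring, Real.sqrt_zero]
  · intro p q
    simp only [coneDist, dist_comm]
    split
    · ring_nf
    · ring
  · intro p q
    simp only [coneDist]
    split
    · exact Real.sqrt_nonneg _
    · have := p.2.2.1; have := q.2.2.1; linarith
  · intro p q r
    obtain ⟨ha0, ha1⟩ := p.2.2
    obtain ⟨hb0, hb1⟩ := q.2.2
    obtain ⟨hc0, hc1⟩ := r.2.2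
    have hθ₁0 : (0:ℝ) ≤ dist p.1 q.1 := dist_nonneg
    have hθ₂0 : (0:ℝ) ≤ dist q.1 r.1 := dist_nonneg
    have hθ₃0 : (0:ℝ) ≤ dist p.1 r.1 := dist_nonneg
    have htri : dist p.1 r.1 ≤ dist p.1 q.1 + dist q.1 r.1 := dist_triangle _ _ _
    set a := ((p.2 : ℝ)) with ha
    set b := ((q.2 : ℝ)) with hb
    set c := ((r.2 : ℝ)) with hc
    -- LHS is always at most a + c
    have hLHS : coneDist p r ≤ a + c := by
      simp only [coneDist]
      split
      · exact coneAux_ub a c _ ha0 hc0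
      · exact le_refl _
    by_cases hsum : dist p.1 q.1 + dist q.1 r.1 < Real.pi
    · -- main case: embed into the plane
      have h1 : dist p.1 q.1 < Real.pi := lt_of_le_of_lt (by linarith) hsum
      have h2 : dist q.1 r.1 < Real.pi := lt_of_le_of_lt (by linarith) hsum
      have h3 : dist p.1 r.1 < Real.pi := lt_of_le_of_lt htri hsum
      have epq : coneDist p q = Real.sqrt (a^2 + b^2 - 2*a*b*Real.cos (dist p.1 q.1)) := by
        simp only [coneDist, if_pos h1]
        rfl
      have eqr : coneDist q r = Real.sqrt (b^2 + c^2 - 2*b*c*Real.cos (dist q.1 r.1)) := by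
        simp only [coneDist, if_pos h2]
        rfl
      have epr : coneDist p r = Real.sqrt (a^2 + c^2 - 2*a*c*Real.cos (dist p.1 r.1)) := by
        simp only [coneDist, if_pos h3]
        rfl
      rw [epq, eqr, epr]
      have hmono : Real.cos (dist p.1 q.1 + dist q.1 r.1) ≤ Real.cos (dist p.1 r.1) :=
        Real.cos_le_cos_of_nonneg_of_le_pi hθ₃0 hsum.le htri
      have step1 : Real.sqrt (a^2 + c^2 - 2*a*c*Real.cos (dist p.1 r.1))
          ≤ Real.sqrt (a^2 + c^2 - 2*a*c*Real.cos (dist p.1 q.1 + dist q.1 r.1)) :=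
        Real.sqrt_le_sqrt (by nlinarith [mul_nonneg ha0 hc0])
      refine step1.trans ?_
      have k1 := coneAux_key a c 0 (dist p.1 q.1 + dist q.1 r.1)
      have k2 := coneAux_key a b 0 (dist p.1 q.1)
      have k3 := coneAux_key b c (dist p.1 q.1) (dist p.1 q.1 + dist q.1 r.1)
      rw [zero_sub, Real.cos_neg] at k1 k2
      rw [show dist p.1 q.1 - (dist p.1 q.1 + dist q.1 r.1) = -(dist q.1 r.1) by ring,
        Real.cos_neg] at k3
      rw [← k1, ← k2, ← k3]
      exact norm_sub_le_norm_sub_add_norm_sub _ _ _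
    · -- degenerate case: RHS is at least a + c
      refine hLHS.trans ?_
      push_neg at hsum
      by_cases h1 : dist p.1 q.1 < Real.pi
      · by_cases h2 : dist q.1 r.1 < Real.pi
        · simp only [coneDist, if_pos h1, if_pos h2]
          have hcos2 : Real.cos (dist q.1 r.1) ≤ -Real.cos (dist p.1 q.1) := by
            rw [← Real.cos_pi_sub]
            exact Real.cos_le_cos_of_nonneg_of_le_pi (by linarith) h2.le (by linarith)
          have hC := Real.cos_sq_le_one (dist p.1 q.1)
          have l1 : a - b * Real.cos (dist p.1 q.1)
              ≤ Real.sqrt (a^2 + b^2 - 2*a*b*Real.cos (dist p.1 q.1)) :=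
            coneAux_lb _ _ (by nlinarith [sq_nonneg b])
          have l2 : c + b * Real.cos (dist p.1 q.1)
              ≤ Real.sqrt (b^2 + c^2 - 2*b*c*Real.cos (dist q.1 r.1)) :=
            coneAux_lb _ _ (by nlinarith [sq_nonneg b, mul_nonneg hb0 hc0])
          linarith
        · simp only [coneDist, if_pos h1, if_neg h2]
          have l1 : a - b ≤ Real.sqrt (a^2 + b^2 - 2*a*b*Real.cos (dist p.1 q.1)) :=
            coneAux_lb _ _ (by nlinarith [Real.cos_le_one (dist p.1 q.1), mul_nonneg ha0 hb0])
          linarith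
      · by_cases h2 : dist q.1 r.1 < Real.pi
        · simp only [coneDist, if_neg h1, if_pos h2]
          have l2 : c - b ≤ Real.sqrt (b^2 + c^2 - 2*b*c*Real.cos (dist q.1 r.1)) :=
            coneAux_lb _ _ (by nlinarith [Real.cos_le_one (dist q.1 r.1), mul_nonneg hb0 hc0])
          linarith
        · simp only [coneDist, if_neg h1, if_neg h2]
          linarith
  · intro x y
    simp only [coneDist]
    split
    · rename_i h
      have hd : (0:ℝ) ≤ dist x y := dist_nonneg
      calc Real.sqrt (((⟨1, by norm_num⟩ : Set.Icc (0:ℝ) 1) : ℝ)^2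
            + ((⟨1, by norm_num⟩ : Set.Icc (0:ℝ) 1) : ℝ)^2
            - 2*((⟨1, by norm_num⟩ : Set.Icc (0:ℝ) 1) : ℝ)*((⟨1, by norm_num⟩ : Set.Icc (0:ℝ) 1) : ℝ)
              *Real.cos (dist x y))
          ≤ Real.sqrt ((dist x y)^2) := by
            apply Real.sqrt_le_sqrt
            push_cast
            nlinarith [Real.one_sub_sq_div_two_le_cos (x := dist x y)]
        _ = dist x y := Real.sqrt_sq hd
    · rename_i h
      linarith [Real.two_le_pi, not_lt.mp h]
end
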